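/- arXiv:2011.05407 — 3 statements merged into one kernel-verified Lean document; each statement's English description precedes it below -/
import Mathlib

section
/- For Re(s) > 2 and a positive integer w, the sum over k from 1 to w of the Barnes double zeta function ζ_B(s; w, 1, k) equals ζ_R(s-1), the Riemann zeta function evaluated at s-1. Here ζ_B(s; a, b, x) = Σ_{m,n≥0} (am + bn + x)^{-s}. -/
/-!
Division with remainder, `j = w m + (k - 1)` with `1 ≤ k ≤ w`, makes the terms of the `w`
Barnes series run exactly once through `(j + n + 1)^{-s}`, `j, n ≥ 0`. Grouping these by
`N = j + n`, the value `(N + 1)^{-s}` occurs `N + 1` times, so the total is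
`Σ_N (N + 1)^{1-s} = ζ(s - 1)`.
-/

/-- The Barnes double zeta function, defined for `Re s > 2` by the double series
`ζ_B(s; a, b, x) = Σ_{m,n≥0} (a m + b n + x)^{-s}`. -/
noncomputable def barnesZeta (s : ℂ) (a b x : ℝ) : ℂ :=
  ∑' p : ℕ × ℕ, ((a * p.1 + b * p.2 + x : ℝ) : ℂ) ^ (-s)

open Finset

theorem sum_Icc_one_eq_sum_fin {M : Type*} [AddCommMonoid M] (w : ℕ) (f : ℕ → M) :
    ∑ k ∈ Icc 1 w, f k = ∑ k : Fin w, f (k + 1) := by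
  rw [Fin.sum_univ_eq_sum_range (fun k => f (k + 1)), range_eq_Ico, sum_Ico_add' f, zero_add]
  rfl

theorem sigmaAntidiagonalEquivProd_fst_add_snd (x : Σ n : ℕ, antidiagonal n) :
    (HasAntidiagonal.sigmaAntidiagonalEquivProd x).1 +
      (HasAntidiagonal.sigmaAntidiagonalEquivProd x).2 = x.1 :=
  mem_antidiagonal.mp x.2.2

theorem tsum_antidiagonal_const {M : Type*} [AddCommMonoid M] [TopologicalSpace M] (n : ℕ)
    (x : M) : ∑' _ : antidiagonal n, x = (n + 1) • x := by
  rw [tsum_fintype, sum_const, card_univ, Fintype.card_coe, Nat.card_antidiagonal]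

section

variable {E : Type*} [NormedAddCommGroup E]

theorem summable_norm_comp_add {g : ℕ → E}
    (hg : Summable fun n : ℕ => ((n : ℝ) + 1) * ‖g n‖) :
    Summable fun p : ℕ × ℕ => ‖g (p.1 + p.2)‖ := by
  have hsigma : Summable fun x : Σ n : ℕ, antidiagonal n => ‖g x.1‖ := by
    refine (summable_sigma_of_nonneg fun _ => norm_nonneg _).mpr
      ⟨fun n => (hasSum_fintype _).summable, ?_⟩
    simpa [tsum_antidiagonal_const] using hg
  refine HasAntidiagonal.sigmaAntidiagonalEquivProd.summable_iff.mp (hsigma.congr fun x => ?_)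
  simp only [Function.comp_apply, sigmaAntidiagonalEquivProd_fst_add_snd]

theorem tsum_comp_add_eq_tsum_succ_nsmul [CompleteSpace E] {g : ℕ → E}
    (hg : Summable fun n : ℕ => ((n : ℝ) + 1) * ‖g n‖) :
    ∑' p : ℕ × ℕ, g (p.1 + p.2) = ∑' n : ℕ, (n + 1) • g n := by
  have hsigma : Summable fun x : Σ n : ℕ, antidiagonal n => g x.1 := by
    refine HasAntidiagonal.sigmaAntidiagonalEquivProd.summable_iff.mpr
      (summable_norm_comp_add hg).of_norm |>.congr fun x => ?_
    simp only [Function.comp_apply, sigmaAntidiagonalEquivProd_fst_add_snd]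
  rw [← HasAntidiagonal.sigmaAntidiagonalEquivProd.tsum_eq,
    tsum_congr fun x => congrArg g (sigmaAntidiagonalEquivProd_fst_add_snd x),
    hsigma.tsum_sigma]
  exact tsum_congr fun n => tsum_antidiagonal_const n (g n)

end

theorem sum_fin_tsum_mul_add_eq_tsum {E β : Type*} [AddCommGroup E] [UniformSpace E]
    [IsUniformAddGroup E] [CompleteSpace E] [T0Space E] (w : ℕ) [NeZero w] {f : ℕ × β → E}
    (hf : Summable f) :
    ∑ k : Fin w, ∑' p : ℕ × β, f (p.1 * w + k, p.2) = ∑' p, f p := by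
  let e : Fin w × (ℕ × β) ≃ ℕ × β :=
    ((Equiv.prodAssoc _ _ _).symm.trans ((Equiv.prodComm _ _).prodCongr (Equiv.refl β))).trans
      ((Nat.divModEquiv w).symm.prodCongr (Equiv.refl β))
  rw [← e.tsum_eq]
  exact ((e.summable_iff.mpr hf).tsum_prod.trans (tsum_fintype _)).symm

open Complex in
theorem natCast_add_one_mul_cpow_neg (n : ℕ) (s : ℂ) :
    ((n : ℂ) + 1) * ((n : ℂ) + 1) ^ (-s) = 1 / ((n : ℂ) + 1) ^ (s - 1) := by
  rw [one_div, ← cpow_neg, neg_sub, sub_eq_add_neg, cpow_add _ _ (Nat.cast_add_one_ne_zero n),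
    cpow_one]

theorem summable_natCast_add_one_mul_norm_cpow_neg {s : ℂ} (hs : 2 < s.re) :
    Summable fun n : ℕ => ((n : ℝ) + 1) * ‖((n : ℂ) + 1) ^ (-s)‖ := by
  have h : Summable fun n : ℕ => 1 / ((n : ℂ) + 1) ^ (s - 1) := by
    have := (summable_nat_add_iff 1).mpr (Complex.summable_one_div_nat_cpow.mpr
      (show 1 < (s - 1).re by rw [Complex.sub_re, Complex.one_re]; linarith))
    simpa using this
  refine (summable_norm_iff.mpr h).congr fun n => ?_
  rw [← natCast_add_one_mul_cpow_neg, norm_mul]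
  norm_cast

theorem riemannZeta_sub_one_eq_tsum {s : ℂ} (hs : 2 < s.re) :
    riemannZeta (s - 1) = ∑' n : ℕ, (n + 1) • ((n : ℂ) + 1) ^ (-s) := by
  rw [zeta_eq_tsum_one_div_nat_add_one_cpow (by rw [Complex.sub_re, Complex.one_re]; linarith)]
  refine tsum_congr fun n => ?_
  rw [← natCast_add_one_mul_cpow_neg, nsmul_eq_mul]
  push_cast
  ring

theorem barnesZeta_natCast_one_succ (s : ℂ) (w k : ℕ) :
    barnesZeta s w 1 (k + 1 : ℕ) = ∑' p : ℕ × ℕ, (((p.1 * w + k + p.2 : ℕ) : ℂ) + 1) ^ (-s) := by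
  refine tsum_congr fun p => ?_
  push_cast
  ring_nf

/-- For `Re s > 2` and a positive integer `w`,
`Σ_{k=1}^{w} ζ_B(s; w, 1, k) = ζ_R(s - 1)`. -/
theorem sum_barnesZeta_eq_riemannZeta (w : ℕ) (hw : 0 < w) (s : ℂ) (hs : 2 < s.re) :
    ∑ k ∈ Finset.Icc 1 w, barnesZeta s (w : ℝ) 1 (k : ℝ) = riemannZeta (s - 1) := by
  have : NeZero w := ⟨hw.ne'⟩
  set g : ℕ → ℂ := fun n => ((n : ℂ) + 1) ^ (-s)
  have hg := summable_natCast_add_one_mul_norm_cpow_neg hs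
  calc ∑ k ∈ Finset.Icc 1 w, barnesZeta s (w : ℝ) 1 (k : ℝ)
      = ∑ k : Fin w, ∑' p : ℕ × ℕ, g (p.1 * w + k + p.2) := by
        simp_rw [sum_Icc_one_eq_sum_fin, barnesZeta_natCast_one_succ]
        rfl
    _ = ∑' p : ℕ × ℕ, g (p.1 + p.2) :=
        sum_fin_tsum_mul_add_eq_tsum w (summable_norm_comp_add hg).of_norm
    _ = ∑' n : ℕ, (n + 1) • g n := tsum_comp_add_eq_tsum_succ_nsmul hg
    _ = riemannZeta (s - 1) := (riemannZeta_sub_one_eq_tsum hs).symm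
end

section
/- For Re(s) > 2 and a positive integer w, ζ_B(s; w, 1, 1) = (1/w) ζ_R(s−1) + w^{−s−1} Σ_{j=1}^{w−1} (w − j) ζ_H(s; j/w). -/
/-- The Hurwitz zeta function, defined for `Re s > 1` by the series
`ζ_H(s; x) = Σ_{m≥0} (m + x)^{-s}`. -/
noncomputable def hurwitzZetaSeries (s : ℂ) (x : ℝ) : ℂ :=
  ∑' m : ℕ, ((m + x : ℝ) : ℂ) ^ (-s)

/-! The terms with `n = 0` of `ζ_B(s; a, 1, k)` form `a^{-s} ζ_H(s; k/a)`, so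
`ζ_B(s; w, 1, k) = ζ_B(s; w, 1, 1) - w^{-s} Σ_{j=1}^{k-1} ζ_H(s; j/w)`. Writing the first index
of `ζ_B(s; 1, 1, 1)` as `w m + (k - 1)` with `1 ≤ k ≤ w` gives
`Σ_{k=1}^{w} ζ_B(s; w, 1, k) = ζ_B(s; 1, 1, 1)`, and `ζ_B(s; 1, 1, 1) = ζ_R(s - 1)` because
`N + 1 = m + n + 1` has `N + 1` solutions. Summing the first identity over `k` and solving for
`ζ_B(s; w, 1, 1)` gives the formula. All double series converge absolutely for `Re s > 2` since
`(u + v)^{-σ} ≤ u^{-σ/2} v^{-σ/2}`. -/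

open Complex Finset

lemma Real.rpow_neg_two_mul_add_le {u v t : ℝ} (hu : 0 < u) (hv : 0 < v) (ht : 0 ≤ t) :
    (u + v) ^ (-(2 * t)) ≤ u ^ (-t) * v ^ (-t) := by
  rw [show -(2 * t) = -t + -t by ring, Real.rpow_add (by positivity)]
  have hnt : -t ≤ 0 := neg_nonpos.mpr ht
  exact mul_le_mul (Real.rpow_le_rpow_of_nonpos hu (by linarith) hnt)
    (Real.rpow_le_rpow_of_nonpos hv (by linarith) hnt) (by positivity) (by positivity)

lemma Real.summable_mul_nat_add_rpow_neg {b c t : ℝ} (hb : 0 < b) (hc : 0 < c) (ht : 1 < t) :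
    Summable fun n : ℕ => (b * n + c) ^ (-t) := by
  refine (((Real.summable_one_div_nat_add_rpow (c / b) t).mpr ht).mul_left (b ^ (-t))).congr
    fun n => ?_
  have hn : 0 < (n : ℝ) + c / b := by positivity
  rw [abs_of_pos hn, show b * n + c = b * (n + c / b) by field_simp,
    Real.mul_rpow hb.le hn.le, Real.rpow_neg hb.le, Real.rpow_neg hn.le, one_div]

lemma summable_barnesZeta {a b x : ℝ} (ha : 0 < a) (hb : 0 < b) (hx : 0 < x) {s : ℂ}
    (hs : 2 < s.re) :
    Summable fun p : ℕ × ℕ => ((a * p.1 + b * p.2 + x : ℝ) : ℂ) ^ (-s) := by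
  have ht : 1 < s.re / 2 := by linarith
  have hu := Real.summable_mul_nat_add_rpow_neg ha (half_pos hx) ht
  have hv := Real.summable_mul_nat_add_rpow_neg hb (half_pos hx) ht
  refine Summable.of_norm_bounded
    (hu.mul_of_nonneg hv (fun _ => by positivity) (fun _ => by positivity)) fun p => ?_
  rw [norm_cpow_eq_rpow_re_of_pos (by positivity), neg_re]
  have h := Real.rpow_neg_two_mul_add_le (u := a * p.1 + x / 2) (v := b * p.2 + x / 2)
    (by positivity) (by positivity) (by positivity : 0 ≤ s.re / 2)
  convert h using 2 <;> ring

lemma tsum_mul_nat_add_cpow_neg {a x : ℝ} (ha : 0 < a) (hx : 0 ≤ x) (s : ℂ) :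
    ∑' m : ℕ, ((a * m + x : ℝ) : ℂ) ^ (-s) =
      (a : ℂ) ^ (-s) * hurwitzZetaSeries s (x / a) := by
  rw [hurwitzZetaSeries, ← tsum_mul_left]
  refine tsum_congr fun m => ?_
  rw [show a * m + x = a * (m + x / a) by field_simp, ofReal_mul,
    mul_cpow_ofReal_nonneg ha.le (by positivity)]

lemma barnesZeta_eq_tsum_add_barnesZeta_add {a b x : ℝ} (ha : 0 < a) (hb : 0 < b) (hx : 0 < x)
    {s : ℂ} (hs : 2 < s.re) :
    barnesZeta s a b x =
      ∑' m : ℕ, ((a * m + x : ℝ) : ℂ) ^ (-s) + barnesZeta s a b (x + b) := by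
  have h := summable_barnesZeta ha hb hx hs
  have h' := summable_barnesZeta ha hb (add_pos hx hb) hs
  have h₀ : Summable fun m : ℕ => ((a * m + x : ℝ) : ℂ) ^ (-s) :=
    (h.comp_injective (Prod.mk_left_injective 0)).congr fun m => by simp
  rw [barnesZeta, barnesZeta, h.tsum_prod, h'.tsum_prod, ← h₀.tsum_add h'.prod]
  refine tsum_congr fun m => ?_
  rw [(h.prod_factor m).tsum_eq_zero_add]
  congr 1
  · simp
  · refine tsum_congr fun n => ?_
    push_cast
    ring_nf

lemma barnesZeta_natCast {a : ℝ} (ha : 0 < a) {s : ℂ} (hs : 2 < s.re) {k : ℕ} (hk : 1 ≤ k) :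
    barnesZeta s a 1 k =
      barnesZeta s a 1 1 - (a : ℂ) ^ (-s) * ∑ j ∈ Ico 1 k, hurwitzZetaSeries s (j / a) := by
  induction k, hk using Nat.le_induction with
  | base => simp
  | succ k hk ih =>
    have hshift :=
      barnesZeta_eq_tsum_add_barnesZeta_add ha one_pos (by positivity : (0 : ℝ) < k) hs
    rw [tsum_mul_nat_add_cpow_neg ha (Nat.cast_nonneg k), ih] at hshift
    rw [sum_Ico_succ_top hk, Nat.cast_succ]
    linear_combination -hshift

lemma sum_range_barnesZeta_mul {a b x : ℝ} (ha : 0 < a) (hb : 0 < b) (hx : 0 < x) {w : ℕ}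
    (hw : 0 < w) {s : ℂ} (hs : 2 < s.re) :
    ∑ k ∈ range w, barnesZeta s (w * a) b (x + k * a) = barnesZeta s a b x := by
  have : NeZero w := ⟨hw.ne'⟩
  -- `(k, (q, n)) ↦ (q * w + k, n)`: write the first index by its quotient and residue mod `w`
  let e : Fin w × (ℕ × ℕ) ≃ ℕ × ℕ := (Equiv.prodAssoc (Fin w) ℕ ℕ).symm.trans
    (((Equiv.prodComm (Fin w) ℕ).trans (Nat.divModEquiv w).symm).prodCongr (Equiv.refl ℕ))
  have hf : Summable fun c => ((a * (e c).1 + b * (e c).2 + x : ℝ) : ℂ) ^ (-s) :=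
    e.summable_iff.mpr (summable_barnesZeta ha hb hx hs)
  rw [barnesZeta, ← e.tsum_eq, hf.tsum_prod' hf.prod_factor, tsum_fintype,
    ← Fin.sum_univ_eq_sum_range]
  refine sum_congr rfl fun k _ => tsum_congr fun p => ?_
  simp only [e, Equiv.trans_apply, Equiv.prodCongr_apply,
    Equiv.prodAssoc_symm_apply, Prod.map, Equiv.prodComm_apply, Prod.swap,
    Nat.divModEquiv_symm_apply, Equiv.refl_apply]
  push_cast
  ring_nf

lemma tsum_prod_comp_add_eq_tsum_succ_nsmul {α : Type*} [AddCommMonoid α] [TopologicalSpace α]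
    [ContinuousAdd α] [T3Space α] {F : ℕ → α}
    (hF : Summable fun p : ℕ × ℕ => F (p.1 + p.2)) :
    ∑' p : ℕ × ℕ, F (p.1 + p.2) = ∑' n : ℕ, (n + 1) • F n := by
  let e := HasAntidiagonal.sigmaAntidiagonalEquivProd (A := ℕ)
  have he : Summable fun c => F ((e c).1 + (e c).2) := e.summable_iff.mpr hF
  rw [← e.tsum_eq, he.tsum_sigma' fun _ => .of_finite]
  refine tsum_congr fun n => ?_
  refine (Finset.tsum_subtype (antidiagonal n) fun p => F (p.1 + p.2)).trans ?_
  rw [sum_congr rfl fun p hp => by rw [mem_antidiagonal.mp hp], sum_const,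
    Nat.card_antidiagonal]

lemma barnesZeta_one_one_one {s : ℂ} (hs : 2 < s.re) :
    barnesZeta s 1 1 1 = riemannZeta (s - 1) := by
  have hterm (p : ℕ × ℕ) :
      ((1 * p.1 + 1 * p.2 + 1 : ℝ) : ℂ) ^ (-s) = ((p.1 + p.2 : ℕ) + 1 : ℂ) ^ (-s) := by
    push_cast; ring_nf
  rw [barnesZeta, zeta_eq_tsum_one_div_nat_add_one_cpow (by rw [sub_re, one_re]; linarith),
    tsum_congr hterm,
    tsum_prod_comp_add_eq_tsum_succ_nsmul (F := fun n : ℕ => ((n : ℂ) + 1) ^ (-s))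
      ((summable_barnesZeta one_pos one_pos one_pos hs).congr hterm)]
  refine tsum_congr fun n => ?_
  have hn : (n : ℂ) + 1 ≠ 0 := by exact_mod_cast n.succ_ne_zero
  rw [nsmul_eq_mul, Nat.cast_succ, one_div, ← cpow_neg, neg_sub, sub_eq_add_neg, cpow_add _ _ hn,
    cpow_one]

lemma sum_range_sum_Ico_one {R : Type*} [CommRing R] (n : ℕ) (f : ℕ → R) :
    ∑ k ∈ range n, ∑ j ∈ Ico 1 (k + 1), f j = ∑ j ∈ Ico 1 n, ((n : R) - j) * f j := by
  rw [sum_comm' (t' := Ico 1 n) (s' := fun j => Ico j n)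
    (by intro k j; simp only [mem_range, mem_Ico]; omega)]
  refine sum_congr rfl fun j hj => ?_
  rw [sum_const, Nat.card_Ico, nsmul_eq_mul, Nat.cast_sub (mem_Ico.mp hj).2.le]

/-- For `Re s > 2` and a positive integer `w`,
`ζ_B(s; w, 1, 1) = (1/w) ζ_R(s−1) + w^{−s−1} Σ_{j=1}^{w−1} (w − j) ζ_H(s; j/w)`. -/
theorem barnesZeta_w_one_one (w : ℕ) (hw : 0 < w) (s : ℂ) (hs : 2 < s.re) :
    barnesZeta s (w : ℝ) 1 1 =
      (1 / w : ℂ) * riemannZeta (s - 1) +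
        (w : ℂ) ^ (-s - 1) *
          ∑ j ∈ Finset.Icc 1 (w - 1), ((w : ℂ) - (j : ℂ)) * hurwitzZetaSeries s ((j : ℝ) / w) := by
  have hwR : (0 : ℝ) < w := by exact_mod_cast hw
  have hwC : (w : ℂ) ≠ 0 := by exact_mod_cast hw.ne'
  have hzeta : ∑ k ∈ range w, barnesZeta s w 1 ((k + 1 : ℕ) : ℝ) = riemannZeta (s - 1) := by
    rw [← barnesZeta_one_one_one hs, ← sum_range_barnesZeta_mul one_pos one_pos one_pos hw hs]
    refine sum_congr rfl fun k _ => ?_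
    push_cast
    ring_nf
  simp_rw [barnesZeta_natCast hwR hs (Nat.le_add_left 1 _), sum_sub_distrib, ← mul_sum,
    sum_range_sum_Ico_one, sum_const, card_range, nsmul_eq_mul, ofReal_natCast] at hzeta
  rw [show Icc 1 (w - 1) = Ico 1 w from rfl, show -s - 1 = -s + -1 by ring, cpow_add _ _ hwC,
    cpow_neg_one, ← hzeta]
  generalize (∑ j ∈ Ico 1 w, _ : ℂ) = S
  field_simp
  ring
end

section
/- The Hurwitz zeta function satisfies ζ_H'(0; x) = log Γ(x) − (1/2) log(2π) for x > 0, where the derivative is with respect to s at s = 0 of the analytic continuation of ζ_H(s; x) = Σ_{m=0}^∞ (m + x)^{-s}. -/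
/-!
Summing the trapezoidal rule for `t ↦ t^{-s}` over `[m + x, m + x + 1]` gives
`ζ_H(s; x) = Σ_m D(s, m + x) + x^{1-s}/(s-1) + x^{-s}/2` for `re s > 1`, where the defect
`D(s, y) = s(s+1) ∫_y^{y+1} (t-y)(y+1-t)/2 · t^{-s-2} dt` is `O(y^{-re s-2})` locally uniformly
in `s`. So the right-hand side is holomorphic on `re s > -1, s ≠ 1` and, by the identity theorem,
equals `Z` near `0`. Differentiating termwise at `s = 0` telescopes: with
`g(y) = y log y - y - ½ log y`, `∂ₛD(0, y) = g(y+1) - g(y) - log y`, and the boundary term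
contributes `g(x)`, so `Z'(0) = lim_N (g(N+x) - Σ_{m<N} log(m+x))`. Comparing with the Euler limit
`log Γ(x) = lim (x log N + log N! - Σ_{m≤N} log(x+m))` and Stirling's formula
`N! ~ √(2πN) (N/e)^N` identifies the limit as `log Γ(x) - ½ log 2π`.
-/

open Filter Topology Finset MeasureTheory

lemma Real.rpow_le_rpow_add_rpow {y c c₁ c₂ : ℝ} (hy : 0 < y) (h₁ : c₁ ≤ c) (h₂ : c ≤ c₂) :
    y ^ c ≤ y ^ c₁ + y ^ c₂ := by
  rcases le_total 1 y with h | h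
  · linarith [Real.rpow_le_rpow_of_exponent_le h h₂, Real.rpow_nonneg hy.le c₁]
  · linarith [Real.rpow_le_rpow_of_exponent_ge hy h h₁, Real.rpow_nonneg hy.le c₂]

lemma summable_nat_add_rpow {x : ℝ} (hx : 0 < x) {c : ℝ} (hc : c < -1) :
    Summable fun m : ℕ => ((m : ℝ) + x) ^ c := by
  refine ((Real.summable_one_div_nat_add_rpow x (-c)).mpr (by linarith)).congr fun m => ?_
  have hm : 0 < (m : ℝ) + x := by positivity
  rw [abs_of_pos hm, one_div, ← Real.rpow_neg hm.le, neg_neg]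

/-- Unlike `hasDerivAt_ofReal_cpow_const`, this allows `r = 0`. -/
lemma hasDerivAt_ofReal_cpow_of_pos {t : ℝ} (ht : 0 < t) (r : ℂ) :
    HasDerivAt (fun u : ℝ => (u : ℂ) ^ r) (r * (t : ℂ) ^ (r - 1)) t := by
  simpa using ((hasDerivAt_id (t : ℂ)).cpow_const (c := r) (by simp [ht])).comp_ofReal

lemma hasDerivAt_ofReal_cpow_const_sub_zero {y : ℝ} (hy : 0 < y) (c : ℂ) :
    HasDerivAt (fun s : ℂ => (y : ℂ) ^ (c - s)) (-(y : ℂ) ^ c * (Real.log y : ℂ)) 0 := by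
  have hy' : (y : ℂ) ≠ 0 := by exact_mod_cast hy.ne'
  simpa [Complex.ofReal_log hy.le] using ((hasDerivAt_id (0 : ℂ)).const_sub c).const_cpow (.inl hy')

lemma tendsto_ofReal_cpow_atTop_zero {c : ℂ} (hc : c.re < 0) :
    Tendsto (fun t : ℝ => (t : ℂ) ^ c) atTop (𝓝 0) := by
  rw [tendsto_zero_iff_norm_tendsto_zero,
    tendsto_congr' (Complex.norm_ofReal_cpow_eventually_eq_atTop c)]
  simpa using tendsto_rpow_neg_atTop (y := -c.re) (by linarith)

lemma eventuallyEq_zero_of_eqOn_re_gt_one {f g : ℂ → ℂ}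
    (hf : DifferentiableOn ℂ f {s | -1 < s.re ∧ s ≠ 1})
    (hg : DifferentiableOn ℂ g {s | -1 < s.re ∧ s ≠ 1}) (hfg : ∀ s : ℂ, 1 < s.re → f s = g s) :
    f =ᶠ[𝓝 0] g := by
  -- a convex open region avoiding the pole and containing both `0` and points with `re s > 1`
  let U : Set ℂ := {s | -1 < s.re} ∩ {s | s.re - s.im < 1}
  have hUopen : IsOpen U := (isOpen_lt continuous_const Complex.continuous_re).inter
    (isOpen_lt (by fun_prop) continuous_const)
  have hUconv : Convex ℝ U :=
    (convex_halfSpace_re_gt (-1)).inter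
      (convex_halfSpace_lt (Complex.reLm - Complex.imLm).isLinear 1)
  have hUsub : U ⊆ {s | -1 < s.re ∧ s ≠ 1} := fun s hs =>
    ⟨hs.1, by rintro rfl; simp [U] at hs⟩
  have hmem : (2 + 2 * Complex.I) ∈ U := by norm_num [U]
  have hfg' : f =ᶠ[𝓝 (2 + 2 * Complex.I)] g :=
    eventually_of_mem ((isOpen_lt continuous_const Complex.continuous_re).mem_nhds
      (by norm_num : (1 : ℝ) < (2 + 2 * Complex.I).re)) hfg
  exact ((hf.mono hUsub).analyticOnNhd hUopen).eqOn_of_preconnected_of_eventuallyEq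
    ((hg.mono hUsub).analyticOnNhd hUopen) hUconv.isPreconnected hmem hfg'
    |>.eventuallyEq_of_mem (hUopen.mem_nhds (by simp [U]))

namespace Lerch

/-- The Euler–Maclaurin approximation of the tail `Σ_{m ≥ 0} (m + y)^{-s}`. -/
noncomputable def tailApprox (s : ℂ) (y : ℝ) : ℂ :=
  (y : ℂ) ^ (1 - s) / (s - 1) + (y : ℂ) ^ (-s) / 2

/-- `(y^{-s} + (y+1)^{-s})/2 - ∫_y^{y+1} t^{-s} dt`, the error of the trapezoidal rule. -/
noncomputable def trapezoidDefect (s : ℂ) (y : ℝ) : ℂ :=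
  (y : ℂ) ^ (-s) + tailApprox s (y + 1) - tailApprox s y

/-- The Peano kernel of the trapezoidal rule on `[y, y + 1]`. -/
noncomputable def peanoKernel (y t : ℝ) : ℝ := (t - y) * (y + 1 - t) / 2

lemma hasDerivAt_peanoKernel (y t : ℝ) : HasDerivAt (peanoKernel y) (y + 1 / 2 - t) t :=
  (((hasDerivAt_id t).sub_const y).mul ((hasDerivAt_id t).const_sub (y + 1))).div_const 2
    |>.congr_deriv (by simp only [id, one_mul, mul_neg, mul_one]; ring)

lemma trapezoidDefect_eq_integral {s : ℂ} (hs : s ≠ 1) {y : ℝ} (hy : 0 < y) :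
    trapezoidDefect s y =
      s * (s + 1) * ∫ t in y..y + 1, (peanoKernel y t : ℂ) * (t : ℂ) ^ (-s - 2) := by
  have hs' : 1 - s ≠ 0 := sub_ne_zero.mpr (Ne.symm hs)
  -- antiderivative obtained by integrating by parts twice against the kernel
  let Φ : ℝ → ℂ := fun t => -s * (peanoKernel y t : ℂ) * (t : ℂ) ^ (-s - 1)
    - ((y + 1 / 2 - t : ℝ) : ℂ) * (t : ℂ) ^ (-s) - (t : ℂ) ^ (1 - s) / (1 - s)
  have hΦ : ∀ t ∈ Set.uIcc y (y + 1),
      HasDerivAt Φ (s * (s + 1) * ((peanoKernel y t : ℂ) * (t : ℂ) ^ (-s - 2))) t := by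
    intro t ht
    rw [Set.uIcc_of_le (by linarith)] at ht
    have ht0 : 0 < t := by linarith [ht.1]
    have hK := (hasDerivAt_peanoKernel y t).ofReal_comp
    have hK' := ((hasDerivAt_id' t).const_sub (y + 1 / 2)).ofReal_comp
    have h1 := hasDerivAt_ofReal_cpow_of_pos ht0 (-s - 1)
    have h2 := hasDerivAt_ofReal_cpow_of_pos ht0 (-s)
    have h3 := hasDerivAt_ofReal_cpow_of_pos ht0 (1 - s)
    rw [show -s - 1 - 1 = -s - 2 by ring] at h1
    rw [show 1 - s - 1 = -s by ring] at h3
    refine (((hK.const_mul (-s)).mul h1).sub (hK'.mul h2)).sub (h3.div_const (1 - s))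
      |>.congr_deriv ?_
    rw [mul_div_cancel_left₀ _ hs']
    push_cast
    ring
  have hint : IntervalIntegrable
      (fun t : ℝ => s * (s + 1) * ((peanoKernel y t : ℂ) * (t : ℂ) ^ (-s - 2)))
      volume y (y + 1) := by
    refine ContinuousOn.intervalIntegrable fun t ht => ?_
    rw [Set.uIcc_of_le (by linarith)] at ht
    have hK : Continuous fun t : ℝ => (peanoKernel y t : ℂ) := by unfold peanoKernel; fun_prop
    exact (continuousAt_const.mul (hK.continuousAt.mul (Complex.continuousAt_ofReal_cpow_const _ _
      (.inr (by linarith [ht.1]))))).continuousWithinAt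
  rw [← intervalIntegral.integral_const_mul, intervalIntegral.integral_eq_sub_of_hasDerivAt hΦ hint]
  simp only [Φ, trapezoidDefect, tailApprox, peanoKernel]
  have hs1 : s - 1 ≠ 0 := sub_ne_zero.mpr hs
  field_simp
  push_cast
  ring

lemma norm_trapezoidDefect_le {s : ℂ} (hs : s ≠ 1) (hs2 : -2 ≤ s.re) {y : ℝ} (hy : 0 < y) :
    ‖trapezoidDefect s y‖ ≤ ‖s‖ * ‖s + 1‖ * y ^ (-s.re - 2) := by
  rw [trapezoidDefect_eq_integral hs hy, norm_mul, norm_mul]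
  gcongr
  have key := intervalIntegral.norm_integral_le_of_norm_le_const (a := y) (b := y + 1)
    (C := y ^ (-s.re - 2)) (f := fun t : ℝ => (peanoKernel y t : ℂ) * (t : ℂ) ^ (-s - 2))
    fun t ht => by
      rw [Set.uIoc_of_le (by linarith)] at ht
      obtain ⟨hyt, hty⟩ := ht
      have hK : 0 ≤ peanoKernel y t := by unfold peanoKernel; nlinarith
      rw [norm_mul, Complex.norm_real, Real.norm_of_nonneg hK,
        Complex.norm_cpow_eq_rpow_re_of_pos (by linarith), show (-s - 2).re = -s.re - 2 by simp]
      have hK1 : peanoKernel y t ≤ 1 := by unfold peanoKernel; nlinarith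
      simpa using mul_le_mul hK1 (Real.rpow_le_rpow_of_nonpos hy hyt.le (by linarith))
        (Real.rpow_nonneg (by linarith) _) zero_le_one
  simpa using key

lemma summable_trapezoidDefect {x : ℝ} (hx : 0 < x) {s : ℂ} (hs : -1 < s.re) (hs1 : s ≠ 1) :
    Summable fun m : ℕ => trapezoidDefect s (m + x) :=
  .of_norm_bounded ((summable_nat_add_rpow hx (c := -s.re - 2) (by linarith)).mul_left
    (‖s‖ * ‖s + 1‖)) fun m => norm_trapezoidDefect_le hs1 (by linarith) (by positivity)

lemma exists_summable_bound_trapezoidDefect {x : ℝ} (hx : 0 < x) {σ : ℝ} (hσ : -1 < σ) {R : ℝ}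
    (hR : 0 < R) :
    ∃ u : ℕ → ℝ, Summable u ∧ ∀ m : ℕ, ∀ s : ℂ, σ < s.re → ‖s‖ < R → s ≠ 1 →
      ‖trapezoidDefect s (m + x)‖ ≤ u m := by
  refine ⟨fun m => R * (R + 1) * (((m : ℝ) + x) ^ (-R - 2) + ((m : ℝ) + x) ^ (-σ - 2)), ?_, ?_⟩
  · exact ((summable_nat_add_rpow hx (by linarith)).add
      (summable_nat_add_rpow hx (by linarith))).mul_left _
  · intro m s hσs hsR hs1
    have hy : 0 < (m : ℝ) + x := by positivity
    have hsR' : s.re < R := (Complex.re_le_norm s).trans_lt hsR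
    calc ‖trapezoidDefect s (m + x)‖ ≤ ‖s‖ * ‖s + 1‖ * ((m : ℝ) + x) ^ (-s.re - 2) :=
          norm_trapezoidDefect_le hs1 (by linarith) hy
      _ ≤ R * (R + 1) * (((m : ℝ) + x) ^ (-R - 2) + ((m : ℝ) + x) ^ (-σ - 2)) := by
          gcongr ?_ * ?_ * ?_
          · exact (norm_add_le s 1).trans (by simp [hsR.le])
          · exact Real.rpow_le_rpow_add_rpow hy (by linarith) (by linarith)

lemma differentiableAt_tailApprox {y : ℝ} (hy : 0 < y) {s : ℂ} (hs : s ≠ 1) :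
    DifferentiableAt ℂ (fun z => tailApprox z y) s := by
  have hy' : (y : ℂ) ≠ 0 := by exact_mod_cast hy.ne'
  unfold tailApprox
  exact ((((differentiableAt_const 1).sub differentiableAt_id).const_cpow (.inl hy')).div
    (differentiableAt_id.sub_const 1) (sub_ne_zero.mpr hs)).add
    ((differentiableAt_id.neg.const_cpow (.inl hy')).div_const 2)

lemma differentiableAt_trapezoidDefect {y : ℝ} (hy : 0 < y) {s : ℂ} (hs : s ≠ 1) :
    DifferentiableAt ℂ (fun z => trapezoidDefect z y) s := by
  have hy' : (y : ℂ) ≠ 0 := by exact_mod_cast hy.ne'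
  exact ((differentiableAt_id.neg.const_cpow (.inl hy')).add
    (differentiableAt_tailApprox (by linarith) hs)).sub (differentiableAt_tailApprox hy hs)

lemma exists_isOpen_summable_bound_trapezoidDefect {x : ℝ} (hx : 0 < x) {s₀ : ℂ}
    (hs₀ : -1 < s₀.re) (hs₀1 : s₀ ≠ 1) :
    ∃ U : Set ℂ, IsOpen U ∧ s₀ ∈ U ∧
      (∀ m : ℕ, DifferentiableOn ℂ (fun s => trapezoidDefect s (m + x)) U) ∧
      ∃ u : ℕ → ℝ, Summable u ∧ ∀ m : ℕ, ∀ s ∈ U, ‖trapezoidDefect s (m + x)‖ ≤ u m := by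
  obtain ⟨u, hu, hbound⟩ := exists_summable_bound_trapezoidDefect hx
    (σ := (s₀.re - 1) / 2) (by linarith) (R := ‖s₀‖ + 1) (by positivity)
  refine ⟨{s | (s₀.re - 1) / 2 < s.re ∧ ‖s‖ < ‖s₀‖ + 1 ∧ s ≠ 1}, ?_,
    ⟨by linarith, by linarith, hs₀1⟩,
    fun m s hs => (differentiableAt_trapezoidDefect (by positivity) hs.2.2).differentiableWithinAt,
    u, hu, fun m s hs => hbound m s hs.1 hs.2.1 hs.2.2⟩
  exact (isOpen_lt continuous_const Complex.continuous_re).inter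
    ((isOpen_lt continuous_norm continuous_const).inter isOpen_ne)

lemma differentiableAt_tsum_trapezoidDefect {x : ℝ} (hx : 0 < x) {s : ℂ} (hs : -1 < s.re)
    (hs1 : s ≠ 1) : DifferentiableAt ℂ (fun z => ∑' m : ℕ, trapezoidDefect z (m + x)) s := by
  obtain ⟨U, hU, hsU, hdiff, u, hu, hbound⟩ :=
    exists_isOpen_summable_bound_trapezoidDefect hx hs hs1
  exact (Complex.differentiableOn_tsum_of_summable_norm hu hdiff hU hbound).differentiableAt
    (hU.mem_nhds hsU)

lemma hasSum_deriv_trapezoidDefect {x : ℝ} (hx : 0 < x) {s : ℂ} (hs : -1 < s.re) (hs1 : s ≠ 1) :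
    HasSum (fun m : ℕ => deriv (fun z => trapezoidDefect z (m + x)) s)
      (deriv (fun z => ∑' m : ℕ, trapezoidDefect z (m + x)) s) := by
  obtain ⟨U, hU, hsU, hdiff, u, hu, hbound⟩ :=
    exists_isOpen_summable_bound_trapezoidDefect hx hs hs1
  exact Complex.hasSum_deriv_of_summable_norm hu hdiff hU hbound hsU

noncomputable def lerchContinuation (x : ℝ) (s : ℂ) : ℂ :=
  (∑' m : ℕ, trapezoidDefect s (m + x)) + tailApprox s x

lemma differentiableOn_lerchContinuation {x : ℝ} (hx : 0 < x) :
    DifferentiableOn ℂ (lerchContinuation x) {s | -1 < s.re ∧ s ≠ 1} := fun _ hs =>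
  ((differentiableAt_tsum_trapezoidDefect hx hs.1 hs.2).add
    (differentiableAt_tailApprox hx hs.2)).differentiableWithinAt

lemma tendsto_tailApprox_atTop {s : ℂ} (hs : 1 < s.re) :
    Tendsto (fun y => tailApprox s y) atTop (𝓝 0) := by
  have h₁ := tendsto_ofReal_cpow_atTop_zero (c := 1 - s) (by simpa)
  have h₂ := tendsto_ofReal_cpow_atTop_zero (c := -s) (by simp only [Complex.neg_re]; linarith)
  simpa [tailApprox] using (h₁.div_const (s - 1)).add (h₂.div_const 2)

lemma sum_range_trapezoidDefect (s : ℂ) (x : ℝ) (N : ℕ) :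
    ∑ m ∈ range N, trapezoidDefect s (m + x) =
      (∑ m ∈ range N, ((m + x : ℝ) : ℂ) ^ (-s)) + tailApprox s (N + x) - tailApprox s x := by
  induction N with
  | zero => simp
  | succ N ih =>
    rw [sum_range_succ, ih, sum_range_succ, trapezoidDefect, Nat.cast_succ, add_right_comm _ 1]
    ring

lemma lerchContinuation_eq_hurwitzZetaSeries {x : ℝ} (hx : 0 < x) {s : ℂ} (hs : 1 < s.re) :
    lerchContinuation x s = hurwitzZetaSeries s x := by
  have hs1 : s ≠ 1 := by rintro rfl; simp at hs
  have hζ : Summable fun m : ℕ => ((m + x : ℝ) : ℂ) ^ (-s) := by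
    refine .of_norm ((summable_nat_add_rpow hx (c := -s.re) (by linarith)).congr fun m => ?_)
    rw [Complex.norm_cpow_eq_rpow_re_of_pos (by positivity), Complex.neg_re]
  have hpartial := (hζ.hasSum.tendsto_sum_nat.add ((tendsto_tailApprox_atTop hs).comp
    (tendsto_atTop_add_const_right _ x tendsto_natCast_atTop_atTop))).sub_const (tailApprox s x)
  simp_rw [Function.comp_apply, ← sum_range_trapezoidDefect, add_zero] at hpartial
  rw [lerchContinuation, hurwitzZetaSeries, tendsto_nhds_unique
    (summable_trapezoidDefect hx (by linarith) hs1).hasSum.tendsto_sum_nat hpartial]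
  ring

/-- `log Γ(y) = stirlingLog y + ½ log 2π + o(1)` as `y → ∞`. -/
noncomputable def stirlingLog (y : ℝ) : ℝ := y * Real.log y - y - Real.log y / 2

lemma stirlingLog_sub_sum_log_eq {x : ℝ} (hx : 0 < x) {N : ℕ} (hN : N ≠ 0) :
    stirlingLog (N + x) - ∑ m ∈ range N, Real.log (m + x) =
      (N + x + 1 / 2) * Real.log (1 + x / N) - x - Real.log 2 / 2
        - Real.log (Stirling.stirlingSeq N) + Real.BohrMollerup.logGammaSeq x N := by
  have hN' : (0 : ℝ) < N := by positivity
  rw [Stirling.log_stirlingSeq_formula, Real.BohrMollerup.logGammaSeq, sum_range_succ,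
    Real.log_mul two_ne_zero hN'.ne', Real.log_div hN'.ne' (Real.exp_pos 1).ne', Real.log_exp,
    show 1 + x / N = (N + x) / N by field_simp, Real.log_div (by positivity) hN'.ne']
  simp only [stirlingLog, add_comm x]
  ring

lemma tendsto_stirlingLog_sub_sum_log {x : ℝ} (hx : 0 < x) :
    Tendsto (fun N : ℕ => stirlingLog (N + x) - ∑ m ∈ range N, Real.log (m + x)) atTop
      (𝓝 (Real.log (Real.Gamma x) - Real.log (2 * Real.pi) / 2)) := by
  have hlog : Tendsto (fun N : ℕ => Real.log (1 + x / N)) atTop (𝓝 0) := by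
    simpa [Function.comp_def] using
      (Real.continuousAt_log (by norm_num : (1 : ℝ) + 0 ≠ 0)).tendsto.comp
        ((tendsto_const_div_atTop_nhds_zero_nat x).const_add 1)
  have hmain : Tendsto (fun N : ℕ => (N + x + 1 / 2) * Real.log (1 + x / N)) atTop (𝓝 x) := by
    have := ((Real.tendsto_mul_log_one_add_div_atTop x).comp tendsto_natCast_atTop_atTop).add
      (hlog.const_mul (x + 1 / 2))
    simpa [add_mul, add_assoc] using this
  have hstirling : Tendsto (fun N : ℕ => Real.log (Stirling.stirlingSeq N)) atTop
      (𝓝 (Real.log Real.pi / 2)) := by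
    simpa [Function.comp_def, Real.log_sqrt Real.pi_pos.le] using
      (Real.continuousAt_log (Real.sqrt_pos.mpr Real.pi_pos).ne').tendsto.comp
        Stirling.tendsto_stirlingSeq_sqrt_pi
  have hlim := (((hmain.sub_const x).sub_const (Real.log 2 / 2)).sub hstirling).add
    (Real.BohrMollerup.tendsto_log_gamma hx)
  rw [Real.log_mul two_ne_zero Real.pi_ne_zero]
  convert hlim.congr' ((eventually_ne_atTop 0).mono fun N hN =>
    (stirlingLog_sub_sum_log_eq hx hN).symm) using 2
  ring

lemma sum_range_stirlingLog_succ_sub (x : ℝ) (N : ℕ) :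
    ∑ m ∈ range N,
        (stirlingLog ((m : ℝ) + x + 1) - stirlingLog ((m : ℝ) + x) - Real.log ((m : ℝ) + x))
      = stirlingLog (N + x) - stirlingLog x - ∑ m ∈ range N, Real.log ((m : ℝ) + x) := by
  induction N with
  | zero => simp
  | succ N ih =>
    rw [sum_range_succ, ih, sum_range_succ, Nat.cast_succ, add_right_comm _ 1]
    ring

lemma hasDerivAt_tailApprox_zero {y : ℝ} (hy : 0 < y) :
    HasDerivAt (fun s => tailApprox s y) (stirlingLog y : ℂ) 0 := by
  have h1 := (hasDerivAt_ofReal_cpow_const_sub_zero hy 1).div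
    ((hasDerivAt_id (0 : ℂ)).sub_const 1) (by norm_num)
  have h2 := (hasDerivAt_ofReal_cpow_const_sub_zero hy 0).div_const 2
  simp only [zero_sub] at h2
  refine (h1.add h2).congr_deriv ?_
  simp only [stirlingLog, sub_zero, Complex.cpow_one, Complex.cpow_zero, id]
  push_cast
  ring

lemma hasDerivAt_trapezoidDefect_zero {y : ℝ} (hy : 0 < y) :
    HasDerivAt (fun s => trapezoidDefect s y)
      ((stirlingLog (y + 1) - stirlingLog y - Real.log y : ℝ) : ℂ) 0 := by
  have h := ((hasDerivAt_ofReal_cpow_const_sub_zero hy 0).add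
    (hasDerivAt_tailApprox_zero (y := y + 1) (by linarith))).sub (hasDerivAt_tailApprox_zero hy)
  simp only [zero_sub, Complex.cpow_zero] at h
  refine h.congr_deriv ?_
  push_cast
  ring

lemma deriv_tsum_trapezoidDefect_zero {x : ℝ} (hx : 0 < x) :
    deriv (fun s => ∑' m : ℕ, trapezoidDefect s (m + x)) 0 =
      ((Real.log (Real.Gamma x) - Real.log (2 * Real.pi) / 2 - stirlingLog x : ℝ) : ℂ) := by
  have hsum := hasSum_deriv_trapezoidDefect hx (s := 0) (by simp) zero_ne_one
  simp_rw [fun m : ℕ => (hasDerivAt_trapezoidDefect_zero (y := m + x) (by positivity)).deriv]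
    at hsum
  refine tendsto_nhds_unique hsum.tendsto_sum_nat ?_
  simp_rw [← Complex.ofReal_sum, sum_range_stirlingLog_succ_sub]
  exact Complex.continuous_ofReal.continuousAt.tendsto.comp
    ((tendsto_stirlingLog_sub_sum_log hx).sub_const _ |>.congr fun N => by ring)

lemma deriv_lerchContinuation_zero {x : ℝ} (hx : 0 < x) :
    deriv (lerchContinuation x) 0 =
      ((Real.log (Real.Gamma x) - Real.log (2 * Real.pi) / 2 : ℝ) : ℂ) := by
  have h : HasDerivAt (lerchContinuation x) _ 0 :=
    (differentiableAt_tsum_trapezoidDefect hx (s := 0) (by simp) zero_ne_one).hasDerivAt.add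
      (hasDerivAt_tailApprox_zero hx)
  rw [h.deriv, deriv_tsum_trapezoidDefect_zero hx]
  push_cast
  ring

end Lerch

open Lerch in
/-- Lerch's formula: for `x > 0`, the analytic continuation `Z` of `s ↦ ζ_H(s; x)`
(holomorphic away from the pole at `s = 1`) satisfies
`ζ_H'(0; x) = log Γ(x) − (1/2) log 2π`. -/
theorem lerch_formula (x : ℝ) (hx : 0 < x) (Z : ℂ → ℂ)
    (hZ : DifferentiableOn ℂ Z {s : ℂ | s ≠ 1})
    (hZeq : ∀ s : ℂ, 1 < s.re → Z s = hurwitzZetaSeries s x) :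
    deriv Z 0 = (Real.log (Real.Gamma x) : ℂ) - (1 / 2 : ℂ) * (Real.log (2 * Real.pi) : ℂ) := by
  have hZF : Z =ᶠ[𝓝 0] lerchContinuation x :=
    eventuallyEq_zero_of_eqOn_re_gt_one (hZ.mono fun _ hs => hs.2)
      (differentiableOn_lerchContinuation hx)
      fun s hs => (hZeq s hs).trans (lerchContinuation_eq_hurwitzZetaSeries hx hs).symm
  rw [hZF.deriv_eq, deriv_lerchContinuation_zero hx]
  push_cast
  ring
end
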